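/- Let (X, T) be a compact dynamical system with the marker property. Then there exists an equivariant continuous map f : X → 𝒴, where 𝒴 = {(x_n)_{n∈ℤ} ∈ (ℝ/2ℤ)^ℤ : max(ρ(x_n, x_{n+1}), ρ(x_{n+1}, x_{n+2})) = 1 for all n} with the shift action, and ρ is the quotient metric ρ(x,y) = min_{n∈ℤ} |x − y − 2n| on ℝ/2ℤ. -/

import Mathlib

/-!
The marker property for `N = 1` gives an open set `U` with `U ∩ T⁻¹ U = ∅` that every orbit meets.
Lindenstrauss' construction turns `U` into a continuous `φ : X → ℝ` with `φ (T x) = φ x + 1`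
unless `T x ∈ U`; it is a smoothed count of the steps since the orbit last visited `U`. Since the
orbit never visits `U` twice in a row, along every orbit one of any two consecutive steps increases
`φ` by exactly `1`, which is half the period of `ℝ/2ℤ`. Hence `x ↦ (φ (Tⁿ x) mod 2)ₙ` lands in `𝒴`.
-/

/-- The subsystem `𝒴 ⊂ (ℝ/2ℤ)^ℤ`: sequences such that among any two consecutive steps,
one has distance exactly `1` (the diameter of `ℝ/2ℤ`). -/
def Yspace : Set (ℤ → AddCircle (2:ℝ)) :=
  {x | ∀ n : ℤ, max (dist (x n) (x (n + 1))) (dist (x (n + 1)) (x (n + 2))) = 1}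

/-- The subsystem `𝒵 ⊂ (ℝ/2ℤ)^ℤ`: sequences such that among any two consecutive steps,
one has distance at least `1/2`. -/
def Zspace : Set (ℤ → AddCircle (2:ℝ)) :=
  {x | ∀ n : ℤ, (1:ℝ)/2 ≤ max (dist (x n) (x (n + 1))) (dist (x (n + 1)) (x (n + 2)))}

open Set Function Finset

namespace AddCircle

variable {p : ℝ}

theorem dist_le_half_period (hp : p ≠ 0) (a b : AddCircle p) : dist a b ≤ |p| / 2 := by
  rw [dist_eq_norm]
  exact norm_le_half_period p hp

theorem dist_coe_add_half_period (x : ℝ) : dist (x : AddCircle p) ↑(x + p / 2) = |p| / 2 := by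
  rw [dist_comm, dist_eq_norm, ← coe_sub, add_sub_cancel_left, norm_half_period_eq]

end AddCircle

theorem coe_mem_Yspace {s : ℤ → ℝ} (hs : ∀ n, s (n + 1) = s n + 1 ∨ s (n + 2) = s (n + 1) + 1) :
    (fun n => (s n : AddCircle (2:ℝ))) ∈ Yspace := by
  have hdist : ∀ x : ℝ, dist (x : AddCircle (2:ℝ)) ↑(x + 1) = 1 := fun x => by
    simpa using AddCircle.dist_coe_add_half_period (p := 2) x
  have hle := AddCircle.dist_le_half_period (p := 2) two_ne_zero
  norm_num at hle
  intro n
  dsimp only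
  rcases hs n with h | h
  · rw [h, hdist]
    exact max_eq_left (hle _ _)
  · rw [h, hdist]
    exact max_eq_right (hle _ _)

theorem Finset.sum_prod_range_eq_one_add_sum_prod_range_succ {R : Type*} [CommSemiring R]
    {a : ℕ → R} {K : ℕ} (h : ∃ j ≤ K, a j = 0) :
    ∑ k ∈ range (K + 1), ∏ j ∈ range k, a j =
      1 + ∑ k ∈ range (K + 1), ∏ j ∈ range (k + 1), a j := by
  obtain ⟨j, hj, hj0⟩ := h
  have hprod : ∏ i ∈ range (K + 1), a i = 0 := prod_eq_zero (mem_range.2 (by omega)) hj0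
  rw [sum_range_succ' (fun k => ∏ j ∈ range k, a j), sum_range_succ, hprod, prod_range_zero,
    add_zero, add_comm]

section Dynamics

variable {X : Type*} [TopologicalSpace X]

theorem Homeomorph.zpow_add_one_apply (T : X ≃ₜ X) (n : ℤ) (x : X) :
    (T ^ (n + 1)) x = T ((T ^ n) x) := by
  rw [add_comm, zpow_one_add, mul_apply]

variable [CompactSpace X]

theorem Continuous.exists_pos_forall_le {f : X → ℝ} (hf : Continuous f) (hpos : ∀ x, 0 < f x) :
    ∃ ε > 0, ∀ x, ε ≤ f x := by
  rcases isEmpty_or_nonempty X with _ | _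
  · exact ⟨1, one_pos, isEmptyElim⟩
  obtain ⟨x₀, -, hx₀⟩ := isCompact_univ.exists_isMinOn univ_nonempty hf.continuousOn
  exact ⟨f x₀, hpos x₀, fun x => hx₀ (mem_univ x)⟩

namespace Homeomorph

variable (T : X ≃ₜ X) {U : Set X}

theorem exists_iterate_symm_mem_of_iUnion_eq_univ (hU : IsOpen U)
    (hcover : (⋃ n : ℕ, T^[n] ⁻¹' U) ∪ (⋃ n : ℕ, T.symm^[n] ⁻¹' U) = univ) :
    ∃ K : ℕ, ∀ x, ∃ j ≤ K, T.symm^[j] x ∈ U := by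
  rw [← iUnion_union_distrib] at hcover
  obtain ⟨t, ht⟩ := isCompact_univ.elim_finite_subcover
    (fun n : ℕ => T^[n] ⁻¹' U ∪ T.symm^[n] ⁻¹' U)
    (fun n => (hU.preimage (T.continuous.iterate n)).union
      (hU.preimage (T.symm.continuous.iterate n)))
    hcover.symm.subset
  set M := t.sup id
  -- Every point reaches `U` within `M` steps, forward or backward; apply this to `T⁻ᴹ x`.
  refine ⟨2 * M, fun x => ?_⟩
  obtain ⟨n, hnt, hn⟩ := mem_iUnion₂.1 (ht (mem_univ (T.symm^[M] x)))
  have hnM : n ≤ M := Finset.le_sup (f := id) hnt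
  rcases hn with h | h
  · obtain ⟨k, hk⟩ := Nat.exists_eq_add_of_le hnM
    rw [Set.mem_preimage, hk, iterate_add_apply, (LeftInverse.iterate T.apply_symm_apply n) _] at h
    exact ⟨k, by omega, h⟩
  · exact ⟨n + M, by omega, by rwa [iterate_add_apply]⟩

variable [PerfectlyNormalSpace X]

theorem exists_continuous_eq_one_iterate_symm (hU : IsOpen U)
    (hcover : (⋃ n : ℕ, T^[n] ⁻¹' U) ∪ (⋃ n : ℕ, T.symm^[n] ⁻¹' U) = univ) :
    ∃ (ψ : X → ℝ) (K : ℕ), Continuous ψ ∧ (∀ x ∉ U, ψ x = 0) ∧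
      ∀ x, ∃ j ≤ K, ψ (T.symm^[j] x) = 1 := by
  obtain ⟨K, hK⟩ := T.exists_iterate_symm_mem_of_iUnion_eq_univ hU hcover
  obtain ⟨ψ₀, hzero, hψ₀⟩ :=
    perfectlyNormalSpace_iff_forall_isClosed_preimage_zero.1 ‹_› Uᶜ hU.isClosed_compl
  have hpos : ∀ x ∈ U, 0 < ψ₀ x := fun x hx =>
    (hψ₀ x).1.lt_of_ne' fun h => (hzero.symm.subset h : x ∈ Uᶜ) hx
  let F : X → ℝ := fun x => (range (K + 1)).sup' nonempty_range_add_one (fun j => ψ₀ (T.symm^[j] x))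
  have hF : Continuous F :=
    Continuous.finset_sup'_apply _ fun j _ => ψ₀.continuous.comp (T.symm.continuous.iterate j)
  obtain ⟨ε, hε, hεF⟩ := hF.exists_pos_forall_le fun x => by
    obtain ⟨j, hj, hjU⟩ := hK x
    exact (hpos _ hjU).trans_le (le_sup' (fun j => ψ₀ (T.symm^[j] x)) (mem_range.2 (by omega)))
  refine ⟨fun x => min 1 (ψ₀ x / ε), K, by fun_prop, fun x hx => ?_, fun x => ?_⟩
  · simp [show ψ₀ x = 0 from hzero.subset hx]
  · obtain ⟨j, hj, hFj⟩ := exists_mem_eq_sup' nonempty_range_add_one (fun j => ψ₀ (T.symm^[j] x))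
    exact ⟨j, by simpa [Nat.lt_succ_iff] using hj, min_eq_left ((one_le_div hε).2 (hFj ▸ hεF x))⟩

theorem exists_continuous_apply_eq_add_one (hU : IsOpen U)
    (hcover : (⋃ n : ℕ, T^[n] ⁻¹' U) ∪ (⋃ n : ℕ, T.symm^[n] ⁻¹' U) = univ) :
    ∃ φ : X → ℝ, Continuous φ ∧ ∀ x, T x ∉ U → φ (T x) = φ x + 1 := by
  obtain ⟨ψ, K, hψ, hψU, hψK⟩ := T.exists_continuous_eq_one_iterate_symm hU hcover
  let a : X → ℕ → ℝ := fun x j => 1 - ψ (T.symm^[j] x)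
  refine ⟨fun x => ∑ k ∈ range (K + 1), ∏ j ∈ range (k + 1), a x j,
    continuous_finsetSum _ fun k _ => continuous_finsetProd _ fun j _ =>
      continuous_const.sub (hψ.comp (T.symm.continuous.iterate j)), fun x hx => ?_⟩
  have hshift : ∀ k, ∏ j ∈ range (k + 1), a (T x) j = ∏ j ∈ range k, a x j := fun k => by
    simp [prod_range_succ', a, hψU _ hx]
  simp only [hshift]
  rw [sum_prod_range_eq_one_add_sum_prod_range_succ, add_comm]
  obtain ⟨j, hj, hj1⟩ := hψK x
  exact ⟨j, hj, by simp [a, hj1]⟩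

end Homeomorph

end Dynamics

theorem equivariant_map_to_Y_of_marker (X : Type*) [TopologicalSpace X] [CompactSpace X]
    [TopologicalSpace.MetrizableSpace X] (T : X ≃ₜ X)
    (marker : ∀ N : ℕ, ∃ U : Set X, IsOpen U ∧
      (∀ n : ℕ, 1 ≤ n → n ≤ N → U ∩ (⇑T)^[n] ⁻¹' U = ∅) ∧
      ((⋃ n : ℕ, (⇑T)^[n] ⁻¹' U) ∪ (⋃ n : ℕ, (⇑T.symm)^[n] ⁻¹' U)) = Set.univ) :
    ∃ f : X → (ℤ → AddCircle (2:ℝ)), Continuous f ∧ (∀ x : X, f x ∈ Yspace) ∧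
      ∀ x : X, f (T x) = fun n => f x (n + 1) := by
  obtain ⟨U, hU, hdisj, hcover⟩ := marker 1
  obtain ⟨φ, hφ, hstep⟩ := T.exists_continuous_apply_eq_add_one hU hcover
  have hreturn : ∀ y, T y ∉ U ∨ T (T y) ∉ U := fun y => not_and_or.1 fun h =>
    eq_empty_iff_forall_notMem.1 (hdisj 1 le_rfl le_rfl) (T y) h
  refine ⟨fun x n => (φ ((T ^ n) x) : AddCircle (2:ℝ)),
    continuous_pi fun n => (AddCircle.continuous_mk' 2).comp (hφ.comp (T ^ n).continuous),
    fun x => coe_mem_Yspace fun n => ?_, fun x => funext fun n => ?_⟩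
  · simp only [show n + 2 = n + 1 + 1 by omega, T.zpow_add_one_apply]
    exact (hreturn _).imp (hstep _) (hstep _)
  · dsimp only
    rw [← Homeomorph.mul_apply, ← zpow_add_one]
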